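/- Let A be a commutative ring that is also a ℚ-algebra, and let D₁, D₂ : A → A be two derivations with D₁ ∘ D₂ = D₂ ∘ D₁. For f, g ∈ A and m ∈ ℕ define the m-th Moyal term B_m(f,g) := Σ_{k₁+k₂=m} ((−1)^{k₂}/(2^m · k₁! · k₂!)) · (D₁^{k₁} D₂^{k₂} f) · (D₁^{k₂} D₂^{k₁} g) ∈ A, and define the Moyal star product ⋆ on A[[t]] by declaring that the n-th coefficient of f ⋆ g is Σ_{p+q+m=n} B_m(f_p, g_q). Extend D₁ and D₂ coefficientwise to maps A[[t]] → A[[t]]. Then D₁ and D₂ are derivations with respect to the Moyal star product: D₁(f ⋆ g) = (D₁ f) ⋆ g + f ⋆ (D₁ g) and D₂(f ⋆ g) = (D₂ f) ⋆ g + f ⋆ (D₂ g) for all f, g ∈ A[[t]]. -/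

import Mathlib

open Finset

/-- The `m`-th term of the Moyal star product built from two derivations `D₁, D₂`. -/
noncomputable def moyalTerm {A : Type*} [CommRing A] [Algebra ℚ A]
    (D₁ D₂ : Derivation ℚ A A) (m : ℕ) (f g : A) : A :=
  ∑ k ∈ Finset.HasAntidiagonal.antidiagonal m,
    (((-1 : ℚ) ^ k.2 / (2 ^ m * k.1.factorial * k.2.factorial)) •
      ((⇑D₁)^[k.1] ((⇑D₂)^[k.2] f) * (⇑D₁)^[k.2] ((⇑D₂)^[k.1] g)))

/-- The Moyal star product on `A⟦t⟧`. -/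
noncomputable def moyalStar {A : Type*} [CommRing A] [Algebra ℚ A]
    (D₁ D₂ : Derivation ℚ A A) (f g : PowerSeries A) : PowerSeries A :=
  PowerSeries.mk fun n =>
    ∑ am ∈ Finset.HasAntidiagonal.antidiagonal n, ∑ pq ∈ Finset.HasAntidiagonal.antidiagonal am.1,
      moyalTerm D₁ D₂ am.2 (PowerSeries.coeff pq.1 f) (PowerSeries.coeff pq.2 g)

/-- The coefficientwise extension of a map `A → A` to `A⟦t⟧`. -/
noncomputable def coeffwise {A : Type*} [CommRing A] (D : A → A) (f : PowerSeries A) :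
    PowerSeries A :=
  PowerSeries.mk fun n => D (PowerSeries.coeff n f)

/-!
Any derivation `D` commuting with `D₁` and `D₂` commutes with every `D₁^a D₂^b`, so the Leibniz
rule for `D` passes through each summand of each Moyal term `B_m`, hence through `⋆`. The theorem
is the cases `D = D₁` and `D = D₂`.
-/

@[simp]
theorem coeff_coeffwise {A : Type*} [CommRing A] (F : A → A) (n : ℕ) (f : PowerSeries A) :
    PowerSeries.coeff n (coeffwise F f) = F (PowerSeries.coeff n f) :=
  PowerSeries.coeff_mk _ _

section

variable {A : Type*} [CommRing A] [Algebra ℚ A] {D₁ D₂ D : Derivation ℚ A A}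

theorem moyalTerm_leibniz (h₁ : Function.Commute ⇑D ⇑D₁) (h₂ : Function.Commute ⇑D ⇑D₂)
    (m : ℕ) (f g : A) :
    D (moyalTerm D₁ D₂ m f g) = moyalTerm D₁ D₂ m (D f) g + moyalTerm D₁ D₂ m f (D g) := by
  have hD (k l : ℕ) (a : A) : D ((⇑D₁)^[k] ((⇑D₂)^[l] a)) = (⇑D₁)^[k] ((⇑D₂)^[l] (D a)) := by
    rw [(h₁.iterate_right k).eq, (h₂.iterate_right l).eq]
  simp only [moyalTerm, map_sum, ← Finset.sum_add_distrib]
  refine Finset.sum_congr rfl fun k _ => ?_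
  rw [D.map_smul, Derivation.leibniz, hD, hD, smul_eq_mul, smul_eq_mul, ← smul_add]
  congr 1
  ring

theorem coeffwise_moyalStar (h₁ : Function.Commute ⇑D ⇑D₁) (h₂ : Function.Commute ⇑D ⇑D₂)
    (f g : PowerSeries A) :
    coeffwise D (moyalStar D₁ D₂ f g) =
      moyalStar D₁ D₂ (coeffwise D f) g + moyalStar D₁ D₂ f (coeffwise D g) := by
  ext n
  simp only [moyalStar, coeff_coeffwise, map_add, PowerSeries.coeff_mk, map_sum,
    moyalTerm_leibniz h₁ h₂, Finset.sum_add_distrib]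

end

/-- The coefficientwise extensions of `D₁` and `D₂` are derivations with respect to the
Moyal star product. -/
theorem coeffwise_derivation_moyalStar {A : Type*} [CommRing A] [Algebra ℚ A]
    (D₁ D₂ : Derivation ℚ A A) (hcomm : ∀ a : A, D₁ (D₂ a) = D₂ (D₁ a))
    (f g : PowerSeries A) :
    coeffwise D₁ (moyalStar D₁ D₂ f g) =
      moyalStar D₁ D₂ (coeffwise D₁ f) g + moyalStar D₁ D₂ f (coeffwise D₁ g) ∧
    coeffwise D₂ (moyalStar D₁ D₂ f g) =
      moyalStar D₁ D₂ (coeffwise D₂ f) g + moyalStar D₁ D₂ f (coeffwise D₂ g) :=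
  ⟨coeffwise_moyalStar (.refl _) hcomm f g,
    coeffwise_moyalStar (Function.Commute.symm hcomm) (.refl _) f g⟩
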